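/- Assume μ̄(⋂_{M>0} closure({τ ≥ M})) = 0 (i.e., assumption (A2) holds under upper semicontinuity of τ at infinity). Then μ̄({ξ < ∞}) = 0, i.e., ξ(x) = ∞ for μ̄-almost every x. -/

import Mathlib

open MeasureTheory ENNReal Filter Set Topology
open scoped NNReal

noncomputable def eexp (a : ℝ≥0∞) : ℝ≥0∞ :=
  if a = ⊤ then ⊤ else ENNReal.ofReal (Real.exp a.toReal)

noncomputable def xiSet {X : Type*} [MeasurableSpace X] (μ : Measure X) (τ : X → ℝ≥0∞)
    (A : Set X) : ℝ≥0∞ :=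
  sSup {c : ℝ≥0∞ | ∃ r : ℝ≥0, c = (r : ℝ≥0∞) ∧ ∫⁻ x in A, eexp ((r : ℝ≥0∞) * τ x) ∂μ < ⊤}

noncomputable def xiDelta {X : Type*} [MeasurableSpace X] [PseudoMetricSpace X]
    (μ : Measure X) (τ : X → ℝ≥0∞) (δ : ℝ) (x : X) : ℝ≥0∞ :=
  xiSet μ τ (Metric.ball x δ)

noncomputable def xi {X : Type*} [MeasurableSpace X] [PseudoMetricSpace X]
    (μ : Measure X) (τ : X → ℝ≥0∞) (x : X) : ℝ≥0∞ :=
  ⨆ (δ : ℝ) (_ : 0 < δ), xiDelta μ τ δ x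

/-! Off `⋂ M, closure {τ ≥ M}` every point has a ball on which `τ` is bounded, and a bounded
function has finite exponential moments of every order on a set of finite measure; hence
`ξ = ∞` there. -/

lemma eexp_mono : Monotone eexp := by
  intro a b hab
  unfold eexp
  by_cases hb : b = ⊤
  · simp [hb]
  · rw [if_neg (ne_top_of_le_ne_top hb hab), if_neg hb]
    exact ENNReal.ofReal_le_ofReal (Real.exp_le_exp.mpr (ENNReal.toReal_mono hb hab))

lemma eexp_lt_top {a : ℝ≥0∞} (ha : a ≠ ⊤) : eexp a < ⊤ := by
  unfold eexp
  rw [if_neg ha]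
  exact ENNReal.ofReal_lt_top

lemma xiSet_eq_top_of_le {X : Type*} [MeasurableSpace X] {μ : Measure X} {τ : X → ℝ≥0∞}
    {A : Set X} {C : ℝ≥0∞} (hA : MeasurableSet A) (hμA : μ A ≠ ⊤) (hC : C ≠ ⊤)
    (hτC : ∀ y ∈ A, τ y ≤ C) : xiSet μ τ A = ⊤ := by
  refine eq_top_iff.mpr <|
    ENNReal.iSup_natCast.ge.trans (iSup_le fun n => le_sSup ⟨n, by simp, ?_⟩)
  calc ∫⁻ y in A, eexp ((n : ℝ≥0∞) * τ y) ∂μ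
      ≤ ∫⁻ _ in A, eexp ((n : ℝ≥0∞) * C) ∂μ :=
        setLIntegral_mono' hA fun y hy => eexp_mono (mul_le_mul_right (hτC y hy) _)
    _ = eexp ((n : ℝ≥0∞) * C) * μ A := setLIntegral_const _ _
    _ < ⊤ := ENNReal.mul_lt_top (eexp_lt_top (ENNReal.mul_ne_top (by simp) hC)) hμA.lt_top

lemma xiDelta_le_xi {X : Type*} [MeasurableSpace X] [PseudoMetricSpace X] (μ : Measure X)
    (τ : X → ℝ≥0∞) {δ : ℝ} (hδ : 0 < δ) (x : X) : xiDelta μ τ δ x ≤ xi μ τ x :=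
  le_iSup₂ (f := fun δ (_ : 0 < δ) => xiDelta μ τ δ x) δ hδ

lemma xi_eq_top_of_notMem_closure {X : Type*} [PseudoMetricSpace X] [MeasurableSpace X]
    [OpensMeasurableSpace X] {μ : Measure X} [IsLocallyFiniteMeasure μ] {τ : X → ℝ≥0∞}
    {C : ℝ≥0∞} (hC : C ≠ ⊤) {x : X} (hx : x ∉ closure {y | C ≤ τ y}) :
    xi μ τ x = ⊤ := by
  have hU : (closure {y | C ≤ τ y})ᶜ ∈ 𝓝 x := isClosed_closure.isOpen_compl.mem_nhds hx
  obtain ⟨s, hs, hμs⟩ := μ.finiteAt_nhds x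
  obtain ⟨δ, hδ, hball⟩ := Metric.mem_nhds_iff.mp (inter_mem hU hs)
  have hτC : ∀ y ∈ Metric.ball x δ, τ y ≤ C := fun y hy =>
    (not_le.mp fun h => (hball hy).1 (subset_closure h)).le
  have hδx : xiDelta μ τ δ x = ⊤ := xiSet_eq_top_of_le Metric.isOpen_ball.measurableSet
    (measure_mono (hball.trans inter_subset_right) |>.trans_lt hμs).ne hC hτC
  exact eq_top_iff.mpr (hδx ▸ xiDelta_le_xi μ τ hδ x)

theorem stmt7_general {X : Type*} [MetricSpace X] [MeasurableSpace X] [BorelSpace X]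
    (μ : Measure X) [IsProbabilityMeasure μ] (τ : X → ℝ≥0∞)
    (hclos : μ (⋂ (M : ℝ) (_ : 0 < M), closure {x | ENNReal.ofReal M ≤ τ x}) = 0) :
    μ {x | xi μ τ x < ⊤} = 0 := by
  refine measure_mono_null (fun x hx => mem_iInter₂.mpr fun M _ => ?_) hclos
  by_contra hxM
  exact hx.ne (xi_eq_top_of_notMem_closure (μ := μ) ofReal_ne_top hxM)

/-- if `μ̄(⋂_{M>0} closure{τ ≥ M}) = 0` (together with (A1)), then
assumption (A2) holds: `ξ = ∞` for `μ̄`-almost every `x`. -/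
theorem stmt7 {X : Type*} [MetricSpace X] [MeasurableSpace X] [BorelSpace X]
    (μ : Measure X) [IsProbabilityMeasure μ] (τ : X → ℝ≥0∞) (hτ : Measurable τ)
    (h0 : μ {x | τ x = 0} = 0) (hinf : μ {x | τ x = ⊤} = 0)
    (hclos : μ (⋂ (M : ℝ) (_ : 0 < M), closure {x | ENNReal.ofReal M ≤ τ x}) = 0) :
    μ {x | xi μ τ x < ⊤} = 0 :=
  stmt7_general μ τ hclos
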